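/- arXiv:2307.10273 — 3 statements merged into one kernel-verified Lean document; each statement's English description precedes it below -/
import Mathlib

section
/- Let n be a positive integer, ε > 0 with εn an integer satisfying εn ≤ n/2, and let X ~ HGeom(n, εn, εn). Then for all t > 0, P(X/n − ε² > t) ≤ exp(−min(t²·n/(4ε²), t·n/4)). -/
/-!
Moment method. For `m ≤ a`, Markov's inequality applied to `C(X, m)` gives
`P(X ≥ a) ≤ E[C(X, m)] / C(a, m)`, and counting the `m`-subsets of `S ∩ T` shows
`E[C(X, m)] = C(k, m)² / C(n, m)`. Hence `P(X ≥ a) ≤ ∏_{i<m} (k-i)² / ((n-i)(a-i))`, and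
each factor is at most `μ / (a - i)` with `μ = k²/n = E X`. From `log x ≥ 2(x-1)/(x+1)` and
the choice `m = ⌈a - μ⌉` (the number of factors below `1`) one gets
`P(X ≥ a) ≤ exp(-(a-μ)² / (a+μ))`; with `a = ⌊tn + μ⌋ + 1` this exponent dominates
`min(t²n/(4ε²), tn/4)`.
-/

open Finset Real

theorem Nat.cast_choose_div_cast_choose (k n m : ℕ) :
    (k.choose m : ℝ) / n.choose m = ∏ i ∈ range m, ((k : ℝ) - i) / (n - i) := by
  rw [Nat.cast_choose_eq_descPochhammer_div ℝ, Nat.cast_choose_eq_descPochhammer_div ℝ,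
    div_div_div_cancel_right₀ (by positivity), descPochhammer_eval_eq_prod_range,
    descPochhammer_eval_eq_prod_range, prod_div_distrib]

theorem div_le_exp_neg_two_mul_sub_div_add {b d : ℝ} (hb : 0 < b) (hbd : b ≤ d) :
    b / d ≤ exp (-(2 * (d - b) / (d + b))) := by
  have hlog := le_log_one_add_of_nonneg (div_nonneg (sub_nonneg.2 hbd) hb.le)
  have hd : 0 < d := hb.trans_le hbd
  rw [show 1 + (d - b) / b = d / b by field_simp; ring,
    show (d - b) / b + 2 = (d + b) / b by field_simp; ring, mul_div_assoc,
    div_div_div_cancel_right₀ hb.ne', ← mul_div_assoc] at hlog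
  calc b / d = exp (-log (d / b)) := by rw [exp_neg, exp_log (by positivity), inv_div]
    _ ≤ _ := exp_le_exp.2 (neg_le_neg hlog)

theorem sq_le_sum_range_ceil_two_mul_sub {D : ℝ} (hD : 0 ≤ D) :
    D ^ 2 ≤ ∑ i ∈ range ⌈D⌉₊, 2 * (D - i) := by
  have gauss : ∀ m : ℕ, ∑ i ∈ range m, 2 * (D - i) = m * (2 * D - m + 1) := by
    intro m
    induction m with
    | zero => simp
    | succ m ih => rw [sum_range_succ, ih]; push_cast; ring
  rw [gauss]
  have h1 := Nat.le_ceil D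
  have h2 := Nat.ceil_lt_add_one hD
  nlinarith

theorem min_le_sq_div_add_two_mul {T D B : ℝ} (hT : 0 < T) (hTD : T < D) (hB : 0 ≤ B) :
    min (T ^ 2 / (4 * B)) (T / 4) ≤ D ^ 2 / (D + 2 * B) := by
  rcases le_total D (2 * B) with hDB | hDB
  · have hB' : 0 < B := by linarith
    calc min (T ^ 2 / (4 * B)) (T / 4) ≤ T ^ 2 / (4 * B) := min_le_left _ _
      _ ≤ D ^ 2 / (4 * B) := by gcongr
      _ ≤ D ^ 2 / (D + 2 * B) :=
        div_le_div_of_nonneg_left (by positivity) (by linarith) (by linarith)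
  · calc min (T ^ 2 / (4 * B)) (T / 4) ≤ T / 4 := min_le_right _ _
      _ ≤ D / 2 := by linarith
      _ ≤ D ^ 2 / (D + 2 * B) := by
        rw [div_le_div_iff₀ two_pos (by linarith)]; nlinarith

theorem sub_div_sub_mul_sub_div_sub_le_exp {k n a i : ℝ} (hi : 0 ≤ i) (hik : i < k)
    (hkn : k ≤ n) (hia : k ^ 2 / n < a - i) :
    (k - i) / (n - i) * ((k - i) / (a - i)) ≤
      exp (-(2 * (a - k ^ 2 / n - i) / (a + k ^ 2 / n))) := by
  have hk : 0 < k := hi.trans_lt hik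
  have hB : 0 < k ^ 2 / n := by have := hk.trans_le hkn; positivity
  have hai : 0 < a - i := hB.trans hia
  calc (k - i) / (n - i) * ((k - i) / (a - i)) ≤ k / n * (k / (a - i)) := by
        gcongr ?_ * ?_
        · exact div_nonneg (by linarith) (by linarith)
        · rw [div_le_div_iff₀ (by linarith) (by linarith)]; nlinarith
        · exact div_le_div_of_nonneg_right (by linarith) hai.le
    _ = k ^ 2 / n / (a - i) := by ring
    _ ≤ exp (-(2 * (a - i - k ^ 2 / n) / (a - i + k ^ 2 / n))) :=
        div_le_exp_neg_two_mul_sub_div_add hB hia.le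
    _ ≤ _ := by
        gcongr exp (-?_)
        rw [sub_right_comm]
        exact div_le_div_of_nonneg_left (by linarith) (by linarith) (by linarith)

section Hypergeometric

variable {α : Type*} [DecidableEq α]

theorem sum_choose_card_inter_powersetCard (U : Finset α) {k l m : ℕ} (hmk : m ≤ k)
    (hml : m ≤ l) :
    ∑ ST ∈ powersetCard k U ×ˢ powersetCard l U, (#(ST.1 ∩ ST.2)).choose m =
      (#U).choose m * ((#U - m).choose (k - m) * (#U - m).choose (l - m)) := by
  have above : ∀ ST ∈ powersetCard k U ×ˢ powersetCard l U,
      #(powersetCard m (ST.1 ∩ ST.2)) =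
        #((powersetCard m U).bipartiteAbove (fun ST A => A ⊆ ST.1 ∩ ST.2) ST) := by
    intro ST hST
    simp only [mem_product, mem_powersetCard] at hST
    congr 1
    ext A
    simp only [bipartiteAbove, mem_filter, mem_powersetCard]
    exact ⟨fun h => ⟨⟨h.1.trans (inter_subset_left.trans hST.1.1), h.2⟩, h.1⟩,
      fun h => ⟨h.2, h.1.2⟩⟩
  have below : ∀ A ∈ powersetCard m U,
      #((powersetCard k U ×ˢ powersetCard l U).bipartiteBelow
        (fun ST A => A ⊆ ST.1 ∩ ST.2) A) =
        (#U - m).choose (k - m) * (#U - m).choose (l - m) := by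
    intro A hA
    rw [mem_powersetCard] at hA
    have hprod : (powersetCard k U ×ˢ powersetCard l U).bipartiteBelow
        (fun ST A => A ⊆ ST.1 ∩ ST.2) A =
        {S ∈ powersetCard k U | A ⊆ S} ×ˢ {T ∈ powersetCard l U | A ⊆ T} := by
      ext ST
      simp only [bipartiteBelow, mem_filter, mem_product, subset_inter_iff]
      tauto
    rw [hprod, card_product, card_filter_powersetCard_subset _ _ _ hA.1 (hA.2 ▸ hmk),
      card_filter_powersetCard_subset _ _ _ hA.1 (hA.2 ▸ hml), hA.2]
  simp_rw [← card_powersetCard]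
  rw [sum_congr rfl above, sum_card_bipartiteAbove_eq_sum_card_bipartiteBelow,
    sum_congr rfl below, sum_const, smul_eq_mul]

theorem card_filter_le_card_inter_mul_choose_le (U : Finset α) {k m a : ℕ} (hmk : m ≤ k) :
    #{ST ∈ powersetCard k U ×ˢ powersetCard k U | a ≤ #(ST.1 ∩ ST.2)} * a.choose m *
        (#U).choose m ≤ ((#U).choose k * k.choose m) ^ 2 := by
  have markov :
      #{ST ∈ powersetCard k U ×ˢ powersetCard k U | a ≤ #(ST.1 ∩ ST.2)} * a.choose m ≤
      ∑ ST ∈ powersetCard k U ×ˢ powersetCard k U, (#(ST.1 ∩ ST.2)).choose m :=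
    calc _ ≤ ∑ ST ∈ powersetCard k U ×ˢ powersetCard k U with a ≤ #(ST.1 ∩ ST.2),
          (#(ST.1 ∩ ST.2)).choose m :=
          card_nsmul_le_sum _ _ _ fun ST hST => Nat.choose_le_choose m (mem_filter.1 hST).2
      _ ≤ _ := sum_le_sum_of_subset (filter_subset _ _)
  calc _ ≤ (∑ ST ∈ powersetCard k U ×ˢ powersetCard k U, (#(ST.1 ∩ ST.2)).choose m) *
        (#U).choose m := Nat.mul_le_mul_right _ markov
    _ = ((#U).choose m * (#U - m).choose (k - m)) ^ 2 := by
      rw [sum_choose_card_inter_powersetCard U hmk hmk]; ring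
    _ = _ := by rw [Nat.choose_mul hmk]

theorem card_filter_le_card_inter_div_card_le_prod (U : Finset α) {k m a : ℕ} (hmk : m ≤ k)
    (hma : m ≤ a) (hkU : k ≤ #U) :
    (#{ST ∈ powersetCard k U ×ˢ powersetCard k U | a ≤ #(ST.1 ∩ ST.2)} : ℝ) /
        #(powersetCard k U ×ˢ powersetCard k U) ≤
      ∏ i ∈ range m, (((k : ℝ) - i) / (#U - i) * ((k - i) / (a - i))) := by
  have hcount := card_filter_le_card_inter_mul_choose_le U (a := a) hmk
  rw [prod_mul_distrib, ← Nat.cast_choose_div_cast_choose, ← Nat.cast_choose_div_cast_choose,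
    card_product, card_powersetCard, Nat.cast_mul,
    div_le_iff₀ (by have := Nat.choose_pos hkU; positivity)]
  have ha : (0 : ℝ) < a.choose m := by have := Nat.choose_pos hma; positivity
  have hU : (0 : ℝ) < (#U).choose m := by have := Nat.choose_pos (hmk.trans hkU); positivity
  calc (#{ST ∈ powersetCard k U ×ˢ powersetCard k U | a ≤ #(ST.1 ∩ ST.2)} : ℝ)
      = #{ST ∈ powersetCard k U ×ˢ powersetCard k U | a ≤ #(ST.1 ∩ ST.2)} * a.choose m *
          (#U).choose m / (a.choose m * (#U).choose m) := by field_simp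
    _ ≤ ((#U).choose k * k.choose m) ^ 2 / (a.choose m * (#U).choose m) := by
        gcongr; exact_mod_cast hcount
    _ = _ := by field_simp

theorem card_filter_le_card_inter_div_card_le_exp (U : Finset α) (k a : ℕ)
    (ha : (k : ℝ) ^ 2 / #U < a) :
    (#{ST ∈ powersetCard k U ×ˢ powersetCard k U | a ≤ #(ST.1 ∩ ST.2)} : ℝ) /
        #(powersetCard k U ×ˢ powersetCard k U) ≤
      exp (-((a - k ^ 2 / #U) ^ 2 / (a + k ^ 2 / #U))) := by
  set B : ℝ := k ^ 2 / #U
  have hB0 : 0 ≤ B := by positivity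
  rcases lt_or_ge k a with hka | hak
  · have hempty :
        {ST ∈ powersetCard k U ×ˢ powersetCard k U | a ≤ #(ST.1 ∩ ST.2)} = ∅ := by
      refine filter_false_of_mem fun ST hST => ?_
      rw [mem_product, mem_powersetCard] at hST
      have := card_le_card (inter_subset_left (s₁ := ST.1) (s₂ := ST.2))
      omega
    rw [hempty, card_empty, Nat.cast_zero, zero_div]
    positivity
  rcases lt_or_ge #U k with hUk | hkU
  · rw [card_product, card_powersetCard, Nat.choose_eq_zero_of_lt hUk, zero_mul, Nat.cast_zero,
      div_zero]
    positivity
  set D : ℝ := a - B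
  have hD : 0 < D := sub_pos.2 ha
  have hma : ⌈D⌉₊ ≤ a := Nat.ceil_le.2 (by linarith)
  have hkU' : (k : ℝ) ≤ #U := by exact_mod_cast hkU
  have hrange : ∀ i ∈ range ⌈D⌉₊, (i : ℝ) < k ∧ (i : ℝ) < D := fun i hi =>
    ⟨by exact_mod_cast (mem_range.1 hi).trans_le (hma.trans hak),
      Nat.lt_ceil.1 (mem_range.1 hi)⟩
  calc _ ≤ ∏ i ∈ range ⌈D⌉₊, (((k : ℝ) - i) / (#U - i) * ((k - i) / (a - i))) :=
        card_filter_le_card_inter_div_card_le_prod U (hma.trans hak) hma hkU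
    _ ≤ ∏ i ∈ range ⌈D⌉₊, exp (-(2 * (D - i) / (a + B))) := by
        refine prod_le_prod (fun i hi => ?_) (fun i hi => ?_) <;>
          obtain ⟨hik, hiD⟩ := hrange i hi
        · exact mul_nonneg (div_nonneg (by linarith) (by linarith))
            (div_nonneg (by linarith) (by linarith))
        · exact sub_div_sub_mul_sub_div_sub_le_exp i.cast_nonneg hik hkU' (by linarith)
    _ = exp (-((∑ i ∈ range ⌈D⌉₊, 2 * (D - i)) / (a + B))) := by
        rw [← exp_sum, sum_div, ← sum_neg_distrib]
    _ ≤ _ := by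
        gcongr exp (-(?_ / _))
        exact sq_le_sum_range_ceil_two_mul_sub hD.le

end Hypergeometric

open scoped Classical

theorem hypergeometric_tail_general (n : ℕ) (hn : 0 < n) (ε t : ℝ) (ht : 0 < t)
    (k : ℕ) (hk : (k : ℝ) = ε * n) :
    ((((Finset.powersetCard k (Finset.univ : Finset (Fin n))) ×ˢ
          (Finset.powersetCard k (Finset.univ : Finset (Fin n)))).filter
        (fun ST => (((ST.1 ∩ ST.2).card : ℝ) / n - ε ^ 2 > t))).card : ℝ) /
      ((((Finset.powersetCard k (Finset.univ : Finset (Fin n))) ×ˢ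
          (Finset.powersetCard k (Finset.univ : Finset (Fin n)))).card : ℝ))
      ≤ Real.exp (-(min (t ^ 2 * n / (4 * ε ^ 2)) (t * n / 4))) := by
  have hnR : (0 : ℝ) < n := by exact_mod_cast hn
  have hB : (k : ℝ) ^ 2 / #(univ : Finset (Fin n)) = ε ^ 2 * n := by
    rw [card_fin, hk]; field_simp
  set a := ⌊t * n + ε ^ 2 * n⌋₊ + 1
  have ha : t * n + ε ^ 2 * n < a := by push_cast [a]; exact Nat.lt_floor_add_one _
  set Ω := powersetCard k (univ : Finset (Fin n))
  calc _ ≤ (#{ST ∈ Ω ×ˢ Ω | a ≤ #(ST.1 ∩ ST.2)} : ℝ) / #(Ω ×ˢ Ω) := by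
        gcongr with ST
        intro hST
        rw [gt_iff_lt, lt_sub_iff_add_lt, lt_div_iff₀ hnR, add_mul] at hST
        exact Nat.floor_lt (by positivity) |>.2 hST
    _ ≤ exp (-((a - ε ^ 2 * n) ^ 2 / (a + ε ^ 2 * n))) := by
        rw [← hB]
        exact card_filter_le_card_inter_div_card_le_exp _ k a
          (by rw [hB]; linarith [mul_pos ht hnR])
    _ ≤ _ := by
        gcongr exp (-?_)
        calc min (t ^ 2 * n / (4 * ε ^ 2)) (t * n / 4)
            = min ((t * n) ^ 2 / (4 * (ε ^ 2 * n))) (t * n / 4) := by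
              rw [show (t * n) ^ 2 = t ^ 2 * n * n by ring,
                show 4 * (ε ^ 2 * n) = 4 * ε ^ 2 * n by ring, mul_div_mul_right _ _ hnR.ne']
          _ ≤ (a - ε ^ 2 * n) ^ 2 / (a - ε ^ 2 * n + 2 * (ε ^ 2 * n)) :=
              min_le_sq_div_add_two_mul (by positivity) (by linarith) (by positivity)
          _ = _ := by ring

/-- Let `εn` be an integer with `εn ≤ n/2`, and let `X ~ HGeom(n, εn, εn)`,
i.e. `X = |S ∩ T|` for `S, T` independent uniformly random subsets of `{1, …, n}` of size `εn`.
Then for all `t > 0`, `P(X/n − ε² > t) ≤ exp(−min(t²·n/(4ε²), t·n/4))`. -/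
theorem hypergeometric_tail (n : ℕ) (hn : 0 < n) (ε t : ℝ) (hε : 0 < ε) (ht : 0 < t)
    (k : ℕ) (hk : (k : ℝ) = ε * n) (hk2 : 2 * k ≤ n) :
    ((((Finset.powersetCard k (Finset.univ : Finset (Fin n))) ×ˢ
          (Finset.powersetCard k (Finset.univ : Finset (Fin n)))).filter
        (fun ST => (((ST.1 ∩ ST.2).card : ℝ) / n - ε ^ 2 > t))).card : ℝ) /
      ((((Finset.powersetCard k (Finset.univ : Finset (Fin n))) ×ˢ
          (Finset.powersetCard k (Finset.univ : Finset (Fin n)))).card : ℝ))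
      ≤ Real.exp (-(min (t ^ 2 * n / (4 * ε ^ 2)) (t * n / 4))) :=
  hypergeometric_tail_general n hn ε t ht k hk
end

section
/- Let k ≤ n be a nonnegative integer, and let w ∈ [0, 1]^n be an n-dimensional vector with ‖w‖₁ ≤ k. Then w is a convex combination of the indicator vectors 1_T over subsets T ⊆ {1, …, n} with |T| ≤ k; that is, there exist subsets T₁, …, T_r ⊆ {1, …, n}, each of size at most k, and nonnegative weights a₁, …, a_r with Σ a_i ≤ 1, such that w = Σ_i a_i·1_{T_i} (where the remaining weight 1 − Σ a_i is placed on the empty set). -/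
/-!
The set `P = {w ∈ [0,1]^ι | ∑ i, w i ≤ k}` is compact and convex, so by Krein–Milman it is the
closure of the convex hull of its extreme points. An extreme point `w` of `P` has no fractional
coordinate: two fractional coordinates can be moved in opposite directions without changing
`∑ i, w i`, and if `w i` is the only fractional coordinate then `∑ i, w i` is not an integer, so
the constraint `∑ i, w i ≤ k` has slack and `w i` can be moved both ways. Hence the extreme points
are indicators `1_T` with `#T ≤ k`; there are finitely many, so their convex hull is already closed.
-/

open Finset

section Convex

variable {𝕜 E α : Type*} [Field 𝕜] [LinearOrder 𝕜] [IsStrictOrderedRing 𝕜] [AddCommGroup E]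
  [Module 𝕜 E]

lemma eq_zero_of_add_mem_of_sub_mem_of_mem_extremePoints {A : Set E} {x v : E}
    (hx : x ∈ A.extremePoints 𝕜) (hadd : x + v ∈ A) (hsub : x - v ∈ A) : v = 0 := by
  simpa using hx.2 hadd hsub (mem_openSegment_add_sub x v)

lemma exists_fin_sum_of_mem_convexHull_image {f : α → E} {s : Set α} {x : E}
    (hx : x ∈ convexHull 𝕜 (f '' s)) :
    ∃ (r : ℕ) (T : Fin r → α) (a : Fin r → 𝕜), (∀ j, T j ∈ s) ∧ (∀ j, 0 ≤ a j) ∧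
      ∑ j, a j = 1 ∧ x = ∑ j, a j • f (T j) := by
  obtain ⟨ι, _, a, z, ha, ha1, hz, rfl⟩ := mem_convexHull_iff_exists_fintype.1 hx
  choose T hT hfT using hz
  let e := (Fintype.equivFin ι).symm
  refine ⟨Fintype.card ι, T ∘ e, a ∘ e, fun j => hT _, fun j => ha _, ?_, ?_⟩
  · rw [← ha1]; exact e.sum_comp a
  · simp_rw [Function.comp_apply, hfT]; exact (e.sum_comp fun i => a i • z i).symm

end Convex

lemma add_mem_Icc_of_abs_le_min {a t : ℝ} (ht : |t| ≤ min a (1 - a)) : a + t ∈ Set.Icc 0 1 := by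
  have := abs_le.1 ht
  constructor <;> linarith [min_le_left a (1 - a), min_le_right a (1 - a)]

section LowerHypersimplex

variable {ι : Type*} [Fintype ι] {k : ℕ} {w : ι → ℝ}

def lowerHypersimplex (ι : Type*) [Fintype ι] (k : ℕ) : Set (ι → ℝ) :=
  Set.Icc 0 1 ∩ {w | ∑ i, w i ≤ k}

lemma mem_lowerHypersimplex :
    w ∈ lowerHypersimplex ι k ↔ (∀ i, 0 ≤ w i ∧ w i ≤ 1) ∧ ∑ i, w i ≤ k := by
  simp [lowerHypersimplex, Pi.le_def, forall_and]

lemma isCompact_lowerHypersimplex : IsCompact (lowerHypersimplex ι k) :=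
  isCompact_Icc.inter_right (isClosed_le (by fun_prop) continuous_const)

lemma convex_lowerHypersimplex : Convex ℝ (lowerHypersimplex ι k) :=
  (convex_Icc 0 1).inter (convex_halfSpace_le ⟨fun _ _ => sum_add_distrib, fun c w => by
    simp [mul_sum]⟩ _)

variable [DecidableEq ι]

lemma add_smul_single_sub_single_mem_lowerHypersimplex (hw : w ∈ lowerHypersimplex ι k)
    {i j : ι} (hij : i ≠ j) {t : ℝ} (hti : |t| ≤ min (w i) (1 - w i))
    (htj : |t| ≤ min (w j) (1 - w j)) :
    w + t • (Pi.single i 1 - Pi.single j 1) ∈ lowerHypersimplex ι k := by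
  rw [mem_lowerHypersimplex] at hw ⊢
  refine ⟨fun l => ?_, ?_⟩
  · rcases eq_or_ne l i with rfl | hli
    · simpa [hij] using add_mem_Icc_of_abs_le_min hti
    rcases eq_or_ne l j with rfl | hlj
    · simpa [hli, ← sub_eq_add_neg] using add_mem_Icc_of_abs_le_min ((abs_neg t).trans_le htj)
    · simpa [hli, hlj] using hw.1 l
  · simpa [sum_add_distrib, ← mul_sum, sum_sub_distrib] using hw.2

lemma add_smul_single_mem_lowerHypersimplex (hw : w ∈ lowerHypersimplex ι k) {i : ι}
    (hint : ∀ j ≠ i, w j = 0 ∨ w j = 1) (hi : 0 < w i) {t : ℝ}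
    (ht : |t| ≤ min (w i) (1 - w i)) :
    w + t • Pi.single i 1 ∈ lowerHypersimplex ι k := by
  rw [mem_lowerHypersimplex] at hw ⊢
  refine ⟨fun l => ?_, ?_⟩
  · rcases eq_or_ne l i with rfl | hli
    · simpa using add_mem_Icc_of_abs_le_min ht
    · simpa [hli] using hw.1 l
  · classical
    set m := #{j ∈ univ.erase i | w j = 1}
    have hsum : ∑ j, w j = w i + m := by
      rw [← add_sum_erase _ _ (mem_univ i), ← sum_boole]
      congr 1
      refine sum_congr rfl fun j hj => ?_
      rcases hint j (ne_of_mem_erase hj) with h | h <;> simp [h]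
    have hm : (m : ℝ) + 1 ≤ k := by
      have : (m : ℝ) < k := by linarith [hw.2]
      exact_mod_cast Nat.add_one_le_iff.2 (by exact_mod_cast this)
    have : ∑ j, (w + t • Pi.single i 1 : ι → ℝ) j = ∑ j, w j + t := by
      simp [sum_add_distrib, Pi.single_apply]
    linarith [(abs_le.1 ht).2, min_le_right (w i) (1 - w i)]

lemma eq_zero_or_eq_one_of_mem_extremePoints_lowerHypersimplex
    (hw : w ∈ (lowerHypersimplex ι k).extremePoints ℝ) (i : ι) : w i = 0 ∨ w i = 1 := by
  have hbox := (mem_lowerHypersimplex.1 hw.1).1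
  have hfrac : ∀ j, ¬(w j = 0 ∨ w j = 1) → 0 < min (w j) (1 - w j) := fun j hj => by
    push Not at hj
    exact lt_min ((hbox j).1.lt_of_ne' hj.1) (sub_pos.2 ((hbox j).2.lt_of_ne hj.2))
  by_contra hi
  by_cases hint : ∀ j ≠ i, w j = 0 ∨ w j = 1
  · set ε := min (w i) (1 - w i)
    have hpos : 0 < w i := (hfrac i hi).trans_le (min_le_left ..)
    have hε0 : 0 < ε := hfrac i hi
    have hε : |ε| ≤ ε := (abs_of_pos hε0).le
    have hsub := add_smul_single_mem_lowerHypersimplex hw.1 hint hpos ((abs_neg ε).trans_le hε)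
    rw [neg_smul, ← sub_eq_add_neg] at hsub
    have h := eq_zero_of_add_mem_of_sub_mem_of_mem_extremePoints hw
      (add_smul_single_mem_lowerHypersimplex hw.1 hint hpos hε) hsub
    simpa [hε0.ne'] using congrFun h i
  · push Not at hint
    obtain ⟨j, hji, hj⟩ := hint
    set ε := min (min (w i) (1 - w i)) (min (w j) (1 - w j))
    have hε : 0 < ε := lt_min (hfrac i hi) (hfrac j (by tauto))
    have hεi : |ε| ≤ min (w i) (1 - w i) := (abs_of_pos hε).trans_le (min_le_left ..)
    have hεj : |ε| ≤ min (w j) (1 - w j) := (abs_of_pos hε).trans_le (min_le_right ..)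
    have hsub := add_smul_single_sub_single_mem_lowerHypersimplex hw.1 hji.symm
      ((abs_neg ε).trans_le hεi) ((abs_neg ε).trans_le hεj)
    rw [neg_smul, ← sub_eq_add_neg] at hsub
    have h := eq_zero_of_add_mem_of_sub_mem_of_mem_extremePoints hw
      (add_smul_single_sub_single_mem_lowerHypersimplex hw.1 hji.symm hεi hεj) hsub
    simpa [hji.symm, hε.ne'] using congrFun h i

lemma extremePoints_lowerHypersimplex_subset : (lowerHypersimplex ι k).extremePoints ℝ ⊆
    (fun T : Finset ι => (T : Set ι).indicator 1) '' {T | #T ≤ k} := by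
  intro w hw
  have h01 := eq_zero_or_eq_one_of_mem_extremePoints_lowerHypersimplex hw
  have hw_eq : (({i | w i = 1} : Finset ι) : Set ι).indicator 1 = w := funext fun i => by
    rcases h01 i with h | h <;> simp [h]
  refine ⟨_, ?_, hw_eq⟩
  have hsum := (mem_lowerHypersimplex.1 hw.1).2
  rw [← hw_eq] at hsum
  simpa [Set.indicator_apply] using hsum

lemma lowerHypersimplex_subset_convexHull : lowerHypersimplex ι k ⊆
    convexHull ℝ ((fun T : Finset ι => (T : Set ι).indicator 1) '' {T | #T ≤ k}) := by
  rw [← closure_convexHull_extremePoints isCompact_lowerHypersimplex convex_lowerHypersimplex]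
  exact closure_minimal (convexHull_mono extremePoints_lowerHypersimplex_subset)
    (((Set.toFinite _).image _).isClosed_convexHull ℝ)

end LowerHypersimplex

theorem convex_combination_of_indicators_general (n k : ℕ) (w : Fin n → ℝ)
    (hw : ∀ i, 0 ≤ w i ∧ w i ≤ 1) (h1 : ∑ i, |w i| ≤ (k : ℝ)) :
    ∃ (r : ℕ) (T : Fin r → Finset (Fin n)) (a : Fin r → ℝ),
      (∀ j, (T j).card ≤ k) ∧ (∀ j, 0 ≤ a j) ∧ (∑ j, a j) ≤ 1 ∧
      ∀ i, w i = ∑ j, a j * (if i ∈ T j then 1 else 0) := by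
  have hsum : ∑ i, w i ≤ k := (sum_congr rfl fun i _ => (abs_of_nonneg (hw i).1).symm).trans_le h1
  obtain ⟨r, T, a, hT, ha, ha1, hwT⟩ := exists_fin_sum_of_mem_convexHull_image
    (lowerHypersimplex_subset_convexHull (mem_lowerHypersimplex.2 ⟨hw, hsum⟩))
  refine ⟨r, T, a, hT, ha, ha1.le, fun i => ?_⟩
  simp [hwT, Set.indicator_apply]

/-- Let `k ≤ n` be a nonnegative integer and `w ∈ [0,1]^n` with `‖w‖₁ ≤ k`.
Then `w` is a convex combination of indicator vectors `1_T` of subsets `T ⊆ {1, …, n}` with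
`|T| ≤ k` (the remaining weight `1 − Σ aᵢ` being placed on the empty set). -/
theorem convex_combination_of_indicators (n k : ℕ) (hk : k ≤ n) (w : Fin n → ℝ)
    (hw : ∀ i, 0 ≤ w i ∧ w i ≤ 1) (h1 : ∑ i, |w i| ≤ (k : ℝ)) :
    ∃ (r : ℕ) (T : Fin r → Finset (Fin n)) (a : Fin r → ℝ),
      (∀ j, (T j).card ≤ k) ∧ (∀ j, 0 ≤ a j) ∧ (∑ j, a j) ≤ 1 ∧
      ∀ i, w i = ∑ j, a j * (if i ∈ T j then 1 else 0) :=
  convex_combination_of_indicators_general n k w hw h1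
end

section
/- There is a universal constant c > 0 such that the following holds. Let X₁, …, Xₙ ∈ ℝ^d be κ-friendly (with corruption parameter ε). Then for any subset B′ ⊆ {1, …, n} of size k ≤ εn, one has |‖Σ_{i∈B′} X_i‖² − k·d| ≤ c·κ·k·(√(εnd) + εn). -/
/-! Expanding the square, `‖∑_{i∈B} Xᵢ‖² - k d` splits into the diagonal deviation
`∑ (‖Xᵢ‖² - d)`, controlled by condition (3), and the off-diagonal part `∑_{i ≠ j} ⟪Xᵢ, Xⱼ⟫`.
Summing `‖Σ_S - Σ_{B∖S}‖² = ‖Σ_B‖² - 4⟪Σ_S, Σ_{B∖S}⟫` over all cuts `S ⊆ B`, and evaluating the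
left side by the parallelogram law, shows that the off-diagonal part is four times the average of
the cross terms `⟪Σ_S, Σ_{B∖S}⟫`; condition (1) bounds each of them, as `√(|S| |B∖S|) ≤ k / 2`. -/

open scoped RealInnerProductSpace

/-- A dataset `X₁, …, Xₙ ∈ ℝ^d` is `κ`-friendly (with corruption parameter `ε`) if:
(1) for all disjoint subsets `S, T ⊆ {1, …, n}` of sizes `≤ εn`,
`|⟨Σ_{i∈S} Xᵢ, Σ_{i∈T} Xᵢ⟩| ≤ κ·√(|S||T|)·max(√(εnd), εn)`;
(2) for all distinct `i ≠ j`, `|⟨Xᵢ, Xⱼ⟩| ≤ κ·√d`;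
(3) for all `i`, `|‖Xᵢ‖² − d| ≤ κ·√d`. -/
def Friendly (d n : ℕ) (ε κ : ℝ) (X : Fin n → EuclideanSpace ℝ (Fin d)) : Prop :=
  (∀ S T : Finset (Fin n), Disjoint S T →
      (S.card : ℝ) ≤ ε * n → (T.card : ℝ) ≤ ε * n →
      |⟪∑ i ∈ S, X i, ∑ i ∈ T, X i⟫| ≤
        κ * (Real.sqrt (S.card * T.card) * max (Real.sqrt (ε * n * d)) (ε * n))) ∧
  (∀ i j : Fin n, i ≠ j → |⟪X i, X j⟫| ≤ κ * Real.sqrt d) ∧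
  (∀ i : Fin n, |‖X i‖ ^ 2 - (d : ℝ)| ≤ κ * Real.sqrt d)

open Finset

theorem sum_powerset_norm_sum_sub_sum_sdiff_sq (𝕜 : Type*) {ι E : Type*} [RCLike 𝕜] [DecidableEq ι]
    [NormedAddCommGroup E] [InnerProductSpace 𝕜 E] (v : ι → E) (B : Finset ι) :
    ∑ S ∈ B.powerset, ‖∑ i ∈ S, v i - ∑ i ∈ B \ S, v i‖ ^ 2 = 2 ^ #B * ∑ i ∈ B, ‖v i‖ ^ 2 := by
  induction B using Finset.induction_on with
  | empty => simp
  | insert a B ha ih =>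
    have split (S : Finset ι) (hS : S ∈ B.powerset) :
        ‖∑ i ∈ insert a S, v i - ∑ i ∈ insert a B \ insert a S, v i‖ ^ 2
          + ‖∑ i ∈ S, v i - ∑ i ∈ insert a B \ S, v i‖ ^ 2
          = 2 * (‖∑ i ∈ S, v i - ∑ i ∈ B \ S, v i‖ ^ 2 + ‖v a‖ ^ 2) := by
      have haS : a ∉ S := fun h => ha (mem_powerset.1 hS h)
      rw [sum_insert haS, insert_sdiff_insert, sdiff_insert_of_notMem ha,
        insert_sdiff_of_notMem _ haS, sum_insert (fun h => ha (mem_sdiff.1 h).1),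
        ← parallelogram_law_with_norm 𝕜]
      congr 3 <;> abel
    rw [sum_powerset_insert ha, add_comm, ← sum_add_distrib, sum_congr rfl split, ← mul_sum,
      sum_add_distrib, ih, sum_const, card_powerset, sum_insert ha, card_insert_of_notMem ha,
      nsmul_eq_mul]
    push_cast
    ring

theorem pow_card_mul_norm_sum_sq_sub_sum_norm_sq {ι E : Type*} [DecidableEq ι]
    [NormedAddCommGroup E] [InnerProductSpace ℝ E] (v : ι → E) (B : Finset ι) :
    2 ^ #B * (‖∑ i ∈ B, v i‖ ^ 2 - ∑ i ∈ B, ‖v i‖ ^ 2)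
      = 4 * ∑ S ∈ B.powerset, ⟪∑ i ∈ S, v i, ∑ i ∈ B \ S, v i⟫ := by
  have cut (S : Finset ι) (hS : S ∈ B.powerset) :
      ‖∑ i ∈ S, v i - ∑ i ∈ B \ S, v i‖ ^ 2
        = ‖∑ i ∈ B, v i‖ ^ 2 - 4 * ⟪∑ i ∈ S, v i, ∑ i ∈ B \ S, v i⟫ := by
    rw [← sum_sdiff (mem_powerset.1 hS), norm_sub_sq_real, norm_add_sq_real,
      real_inner_comm (∑ i ∈ S, v i)]
    ring
  have h := sum_powerset_norm_sum_sub_sum_sdiff_sq ℝ v B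
  rw [sum_congr rfl cut, sum_sub_distrib, sum_const, card_powerset, nsmul_eq_mul, ← mul_sum] at h
  push_cast at h
  linarith

theorem abs_norm_sum_sq_sub_sum_norm_sq_le {ι E : Type*} [DecidableEq ι]
    [NormedAddCommGroup E] [InnerProductSpace ℝ E] (v : ι → E) (B : Finset ι) {M : ℝ}
    (hM : ∀ S ⊆ B, |⟪∑ i ∈ S, v i, ∑ i ∈ B \ S, v i⟫| ≤ M) :
    |‖∑ i ∈ B, v i‖ ^ 2 - ∑ i ∈ B, ‖v i‖ ^ 2| ≤ 4 * M := by
  have hsum : |∑ S ∈ B.powerset, ⟪∑ i ∈ S, v i, ∑ i ∈ B \ S, v i⟫| ≤ 2 ^ #B * M := by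
    calc _ ≤ ∑ S ∈ B.powerset, |⟪∑ i ∈ S, v i, ∑ i ∈ B \ S, v i⟫| := abs_sum_le_sum_abs _ _
      _ ≤ ∑ S ∈ B.powerset, M := sum_le_sum fun S hS => hM S (mem_powerset.1 hS)
      _ = 2 ^ #B * M := by rw [sum_const, card_powerset, nsmul_eq_mul]; push_cast; rfl
  refine le_of_mul_le_mul_left ?_ (by positivity : (0 : ℝ) < 2 ^ #B)
  calc 2 ^ #B * |‖∑ i ∈ B, v i‖ ^ 2 - ∑ i ∈ B, ‖v i‖ ^ 2|
      = |2 ^ #B * (‖∑ i ∈ B, v i‖ ^ 2 - ∑ i ∈ B, ‖v i‖ ^ 2)| := by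
        rw [abs_mul, abs_of_pos (by positivity : (0 : ℝ) < 2 ^ #B)]
    _ = 4 * |∑ S ∈ B.powerset, ⟪∑ i ∈ S, v i, ∑ i ∈ B \ S, v i⟫| := by
        rw [pow_card_mul_norm_sum_sq_sub_sum_norm_sq, abs_mul,
          abs_of_pos (by norm_num : (0 : ℝ) < 4)]
    _ ≤ 4 * (2 ^ #B * M) := by gcongr
    _ = 2 ^ #B * (4 * M) := by ring

theorem Real.sqrt_mul_le_add_div_two {x y : ℝ} (hx : 0 ≤ x) (hy : 0 ≤ y) :
    √(x * y) ≤ (x + y) / 2 :=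
  Real.sqrt_le_iff.2 ⟨by positivity, by nlinarith [sq_nonneg (x - y)]⟩

namespace Friendly

variable {d n : ℕ} {ε κ : ℝ} {X : Fin n → EuclideanSpace ℝ (Fin d)}

theorem abs_inner_sum_sum_sdiff_le (hF : Friendly d n ε κ X) (hκ : 0 ≤ κ) {B S : Finset (Fin n)}
    (hB : (#B : ℝ) ≤ ε * n) (hS : S ⊆ B) :
    |⟪∑ i ∈ S, X i, ∑ i ∈ B \ S, X i⟫| ≤
      κ * (#B / 2 * max (√(ε * n * d)) (ε * n)) := by
  have hcard : (#S : ℝ) + #(B \ S) = #B := by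
    rw [add_comm]; exact_mod_cast card_sdiff_add_card_eq_card hS
  refine (hF.1 S (B \ S) disjoint_sdiff ((Nat.cast_le.2 (card_le_card hS)).trans hB)
    ((Nat.cast_le.2 (card_le_card sdiff_subset)).trans hB)).trans ?_
  refine mul_le_mul_of_nonneg_left (mul_le_mul_of_nonneg_right ?_ ?_) hκ
  · exact hcard ▸ Real.sqrt_mul_le_add_div_two (Nat.cast_nonneg _) (Nat.cast_nonneg _)
  · exact (Real.sqrt_nonneg _).trans (le_max_left _ _)

theorem abs_sum_norm_sq_sub_le (hF : Friendly d n ε κ X) (B : Finset (Fin n)) :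
    |∑ i ∈ B, ‖X i‖ ^ 2 - #B * d| ≤ #B * (κ * √d) := by
  calc |∑ i ∈ B, ‖X i‖ ^ 2 - #B * d| = |∑ i ∈ B, (‖X i‖ ^ 2 - d)| := by
        rw [sum_sub_distrib, sum_const, nsmul_eq_mul]
    _ ≤ ∑ i ∈ B, |‖X i‖ ^ 2 - d| := abs_sum_le_sum_abs _ _
    _ ≤ ∑ i ∈ B, κ * √d := sum_le_sum fun i _ => hF.2.2 i
    _ = #B * (κ * √d) := by rw [sum_const, nsmul_eq_mul]

end Friendly

/-- There is a universal constant `c > 0` such that for any `κ`-friendly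
dataset `X₁, …, Xₙ ∈ ℝ^d` and any subset `B′ ⊆ {1, …, n}` of size `k ≤ εn`,
`|‖Σ_{i∈B′} Xᵢ‖² − k·d| ≤ c·κ·k·(√(εnd) + εn)`. -/
theorem norm_sum_bound : ∃ c : ℝ, 0 < c ∧
    ∀ (d n : ℕ) (ε κ : ℝ) (X : Fin n → EuclideanSpace ℝ (Fin d)),
      0 < ε → ε ≤ 1 → 0 < κ → Friendly d n ε κ X →
      ∀ B' : Finset (Fin n), (B'.card : ℝ) ≤ ε * n →
        |‖∑ i ∈ B', X i‖ ^ 2 - (B'.card : ℝ) * d| ≤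
          c * κ * B'.card * (Real.sqrt (ε * n * d) + ε * n) := by
  refine ⟨3, by norm_num, fun d n ε κ X hε _ hκ hF B hB => ?_⟩
  rcases B.eq_empty_or_nonempty with rfl | hne
  · simp
  set m := max (√(ε * n * d)) (ε * n)
  have hεn : 1 ≤ ε * n := (Nat.one_le_cast.2 (card_pos.2 hne)).trans hB
  have hd : √d ≤ m :=
    (Real.sqrt_le_sqrt (le_mul_of_one_le_left (Nat.cast_nonneg _) hεn)).trans (le_max_left _ _)
  have hm : m ≤ √(ε * n * d) + ε * n :=
    max_le (le_add_of_nonneg_right (by linarith)) (le_add_of_nonneg_left (Real.sqrt_nonneg _))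
  have hdiag : |∑ i ∈ B, ‖X i‖ ^ 2 - #B * d| ≤ #B * (κ * m) :=
    (hF.abs_sum_norm_sq_sub_le B).trans (by gcongr)
  have hcross := abs_norm_sum_sq_sub_sum_norm_sq_le X B fun S hS =>
    hF.abs_inner_sum_sum_sdiff_le hκ.le hB hS
  calc |‖∑ i ∈ B, X i‖ ^ 2 - #B * d|
      ≤ |‖∑ i ∈ B, X i‖ ^ 2 - ∑ i ∈ B, ‖X i‖ ^ 2| + |∑ i ∈ B, ‖X i‖ ^ 2 - #B * d| :=
        abs_sub_le _ _ _
    _ ≤ 3 * κ * #B * m := by linarith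
    _ ≤ 3 * κ * #B * (√(ε * n * d) + ε * n) := by gcongr
end
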